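/- arXiv:2008.06476 — 5 statements merged into one kernel-verified Lean document; each statement's English description precedes it below -/
import Mathlib

section
/- Fix x ∈ ℝⁿ. Assume every node has degree mᵢ ≥ 1 and F has full column rank. Then the function ρ ↦ T(x,ρ) = xᵀK(ρ)x is concave on the open interval (0,1). -/
open Matrix

/-- Degree of node `i`: `mᵢ = ∑ⱼ Wᵢⱼ`. -/
noncomputable def degVec {n : ℕ} (W : Matrix (Fin n) (Fin n) ℝ) (i : Fin n) : ℝ := ∑ j, W i j

/-- `R(ρ) = D - ρ W` where `D = diag(m₁,…,mₙ)`. -/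
noncomputable def Rmat {n : ℕ} (W : Matrix (Fin n) (Fin n) ℝ) (ρ : ℝ) :
    Matrix (Fin n) (Fin n) ℝ :=
  Matrix.diagonal (degVec W) - ρ • W

/-- `K(ρ) = (D-ρW) - (D-ρW)F[Fᵀ(D-ρW)F]⁻¹Fᵀ(D-ρW)`. -/
noncomputable def Kmat {n p : ℕ} (W : Matrix (Fin n) (Fin n) ℝ)
    (F : Matrix (Fin n) (Fin (p + 1)) ℝ) (ρ : ℝ) : Matrix (Fin n) (Fin n) ℝ :=
  Rmat W ρ - Rmat W ρ * F * (Fᵀ * Rmat W ρ * F)⁻¹ * Fᵀ * Rmat W ρ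

/-- `T(x,ρ) = xᵀ K(ρ) x`. -/
noncomputable def Tcrit {n p : ℕ} (W : Matrix (Fin n) (Fin n) ℝ)
    (F : Matrix (Fin n) (Fin (p + 1)) ℝ) (x : Fin n → ℝ) (ρ : ℝ) : ℝ :=
  x ⬝ᵥ (Kmat W F ρ).mulVec x

/-!
Completing the square in `c` gives
`(x - F c)ᵀ R (x - F c) = xᵀ K x + (c - ĉ)ᵀ (Fᵀ R F) (c - ĉ)` with `ĉ = (Fᵀ R F)⁻¹ Fᵀ R x`,
so for `R = D - ρW` positive definite, `T(x, ρ)` is the minimum over `c` of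
`(x - F c)ᵀ (D - ρW) (x - F c)`. Each of these is affine in `ρ`, and a pointwise minimum of
affine functions is concave. Positive definiteness of `D - ρW` for `0 ≤ ρ < 1` follows from
`yᵀ D y - yᵀ W y = ½ ∑ᵢⱼ Wᵢⱼ (yᵢ - yⱼ)² ≥ 0`.
-/

section GeneralizedLeastSquares

variable {ι κ : Type*} [Fintype ι] [Fintype κ] [DecidableEq κ]

lemma Matrix.IsSymm.dotProduct_mulVec_comm {R : Matrix ι ι ℝ} (hR : R.IsSymm) (u v : ι → ℝ) :
    u ⬝ᵥ (R *ᵥ v) = v ⬝ᵥ (R *ᵥ u) := by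
  rw [dotProduct_mulVec, ← mulVec_transpose, hR.eq, dotProduct_comm]

lemma Matrix.IsSymm.dotProduct_sub_mulVec_sub {R : Matrix ι ι ℝ} (hR : R.IsSymm) (u v : ι → ℝ) :
    (u - v) ⬝ᵥ (R *ᵥ (u - v)) = u ⬝ᵥ (R *ᵥ u) - 2 * (v ⬝ᵥ (R *ᵥ u)) + v ⬝ᵥ (R *ᵥ v) := by
  rw [mulVec_sub, dotProduct_sub, sub_dotProduct, sub_dotProduct,
    hR.dotProduct_mulVec_comm u v]
  ring

/-- The weighted least-squares coefficient, minimizing `c ↦ (x - F c)ᵀ R (x - F c)`. -/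
noncomputable def glsCoeff (R : Matrix ι ι ℝ) (F : Matrix ι κ ℝ) (x : ι → ℝ) : κ → ℝ :=
  (Fᵀ * R * F)⁻¹ *ᵥ (Fᵀ *ᵥ (R *ᵥ x))

variable {R : Matrix ι ι ℝ} {F : Matrix ι κ ℝ}

lemma transpose_mulVec_mulVec_sub_glsCoeff (hM : IsUnit (Fᵀ * R * F)) (x : ι → ℝ) :
    Fᵀ *ᵥ (R *ᵥ (x - F *ᵥ glsCoeff R F x)) = 0 := by
  have hFRF (v : κ → ℝ) : Fᵀ *ᵥ (R *ᵥ (F *ᵥ v)) = (Fᵀ * R * F) *ᵥ v := by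
    simp only [mulVec_mulVec, Matrix.mul_assoc]
  rw [mulVec_sub, mulVec_sub, hFRF, glsCoeff, mulVec_mulVec _ (Fᵀ * R * F),
    mul_nonsing_inv _ ((isUnit_iff_isUnit_det _).mp hM), one_mulVec, sub_self]

lemma mulVec_dotProduct_mulVec_sub_glsCoeff (hM : IsUnit (Fᵀ * R * F)) (x : ι → ℝ)
    (c : κ → ℝ) : (F *ᵥ c) ⬝ᵥ (R *ᵥ (x - F *ᵥ glsCoeff R F x)) = 0 := by
  rw [dotProduct_comm, ← dotProduct_transpose_mulVec F, transpose_mulVec_mulVec_sub_glsCoeff hM,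
    dotProduct_zero]

lemma dotProduct_mulVec_sub_glsCoeff (hM : IsUnit (Fᵀ * R * F)) (x : ι → ℝ) :
    (x - F *ᵥ glsCoeff R F x) ⬝ᵥ (R *ᵥ (x - F *ᵥ glsCoeff R F x)) =
      x ⬝ᵥ ((R - R * F * (Fᵀ * R * F)⁻¹ * Fᵀ * R) *ᵥ x) := by
  have hproj : (R * F * (Fᵀ * R * F)⁻¹ * Fᵀ * R) *ᵥ x = R *ᵥ (F *ᵥ glsCoeff R F x) := by
    simp only [glsCoeff, mulVec_mulVec, Matrix.mul_assoc]
  rw [sub_mulVec, hproj, ← mulVec_sub, sub_dotProduct,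
    mulVec_dotProduct_mulVec_sub_glsCoeff hM, sub_zero]

lemma dotProduct_mulVec_sub_eq_schur_add (hR : R.IsSymm) (hM : IsUnit (Fᵀ * R * F)) (x : ι → ℝ)
    (c : κ → ℝ) :
    (x - F *ᵥ c) ⬝ᵥ (R *ᵥ (x - F *ᵥ c)) =
      x ⬝ᵥ ((R - R * F * (Fᵀ * R * F)⁻¹ * Fᵀ * R) *ᵥ x) +
        (c - glsCoeff R F x) ⬝ᵥ ((Fᵀ * R * F) *ᵥ (c - glsCoeff R F x)) := by
  have hsplit : x - F *ᵥ c = (x - F *ᵥ glsCoeff R F x) - F *ᵥ (c - glsCoeff R F x) := by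
    rw [mulVec_sub]; abel
  rw [hsplit, hR.dotProduct_sub_mulVec_sub, mulVec_dotProduct_mulVec_sub_glsCoeff hM,
    dotProduct_mulVec_sub_glsCoeff hM, dotProduct_comm (F *ᵥ _), ← dotProduct_transpose_mulVec F,
    mulVec_mulVec, mulVec_mulVec]
  ring

lemma dotProduct_schur_mulVec_le (hR : R.IsSymm) (hM : (Fᵀ * R * F).PosDef) (x : ι → ℝ)
    (c : κ → ℝ) :
    x ⬝ᵥ ((R - R * F * (Fᵀ * R * F)⁻¹ * Fᵀ * R) *ᵥ x) ≤ (x - F *ᵥ c) ⬝ᵥ (R *ᵥ (x - F *ᵥ c)) := by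
  rw [dotProduct_mulVec_sub_eq_schur_add hR hM.isUnit]
  simpa using hM.posSemidef.dotProduct_mulVec_nonneg (c - glsCoeff R F x)

end GeneralizedLeastSquares

theorem concaveOn_of_forall_le_of_exists_eq {α E : Type*} [AddCommGroup E] [Module ℝ E]
    {s : Set E} {f : E → ℝ} {g : α → E → ℝ} (hg : ∀ a, ConcaveOn ℝ s (g a))
    (hle : ∀ x ∈ s, ∀ a, f x ≤ g a x) (heq : ∀ x ∈ s, ∃ a, g a x = f x) :
    ConcaveOn ℝ s f := by
  have hs : Convex ℝ s := fun x hx => (hg (heq x hx).choose).1 hx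
  refine ⟨hs, fun x hx y hy t u ht hu htu => ?_⟩
  obtain ⟨a, ha⟩ := heq _ (hs hx hy ht hu htu)
  calc t • f x + u • f y ≤ t • g a x + u • g a y := by gcongr <;> exact hle _ ‹_› a
    _ ≤ g a (t • x + u • y) := (hg a).2 hx hy ht hu htu
    _ = f (t • x + u • y) := ha

lemma Matrix.mulVec_injective_of_rank_eq_card {m n K : Type*} [Fintype m] [Fintype n] [Field K]
    {A : Matrix m n K} (hA : A.rank = Fintype.card n) : Function.Injective A.mulVec := by
  have hrank := LinearMap.finrank_range_add_finrank_ker A.mulVecLin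
  rw [← Matrix.rank, hA, Module.finrank_fintype_fun_eq_card] at hrank
  have hker : Module.finrank K (LinearMap.ker A.mulVecLin) = 0 := by omega
  exact LinearMap.ker_eq_bot.mp (Submodule.finrank_eq_zero.mp hker)

section Rmat

variable {n : ℕ} {W : Matrix (Fin n) (Fin n) ℝ}

lemma Rmat_isSymm (hW : W.IsSymm) (ρ : ℝ) : (Rmat W ρ).IsSymm :=
  (isSymm_diagonal _).sub (hW.smul ρ)

lemma dotProduct_Rmat_mulVec (ρ : ℝ) (y : Fin n → ℝ) :
    y ⬝ᵥ (Rmat W ρ *ᵥ y) = y ⬝ᵥ (diagonal (degVec W) *ᵥ y) - ρ * (y ⬝ᵥ (W *ᵥ y)) := by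
  rw [Rmat, sub_mulVec, dotProduct_sub, smul_mulVec, dotProduct_smul, smul_eq_mul]

lemma concaveOn_dotProduct_Rmat_mulVec {s : Set ℝ} (hs : Convex ℝ s) (y : Fin n → ℝ) :
    ConcaveOn ℝ s fun ρ => y ⬝ᵥ (Rmat W ρ *ᵥ y) := by
  simp_rw [dotProduct_Rmat_mulVec]
  exact (concaveOn_const _ hs).sub ((LinearMap.mulRight ℝ (y ⬝ᵥ (W *ᵥ y))).convexOn hs)

lemma dotProduct_mulVec_le_dotProduct_diagonal_degVec_mulVec (hW : W.IsSymm)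
    (hW₀ : ∀ i j, 0 ≤ W i j) (y : Fin n → ℝ) :
    y ⬝ᵥ (W *ᵥ y) ≤ y ⬝ᵥ (diagonal (degVec W) *ᵥ y) := by
  have hswap : ∑ i, ∑ j, W i j * y j ^ 2 = ∑ i, ∑ j, W i j * y i ^ 2 := by
    rw [Finset.sum_comm]; simp_rw [hW.apply]
  have hdiag : y ⬝ᵥ (diagonal (degVec W) *ᵥ y) = ∑ i, ∑ j, W i j * y i ^ 2 := by
    simp only [dotProduct, mulVec_diagonal, degVec, Finset.sum_mul, Finset.mul_sum]
    exact Finset.sum_congr rfl fun i _ => Finset.sum_congr rfl fun j _ => by ring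
  have hoff : y ⬝ᵥ (W *ᵥ y) = ∑ i, ∑ j, W i j * (y i * y j) := by
    simp only [dotProduct, mulVec, Finset.mul_sum]
    exact Finset.sum_congr rfl fun i _ => Finset.sum_congr rfl fun j _ => by ring
  have hexpand : ∑ i, ∑ j, W i j * (y i - y j) ^ 2 =
      ∑ i, ∑ j, W i j * y i ^ 2 + ∑ i, ∑ j, W i j * y j ^ 2 -
        2 * ∑ i, ∑ j, W i j * (y i * y j) := by
    simp only [Finset.mul_sum, ← Finset.sum_add_distrib, ← Finset.sum_sub_distrib]
    exact Finset.sum_congr rfl fun i _ => Finset.sum_congr rfl fun j _ => by ring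
  have hnonneg : 0 ≤ ∑ i, ∑ j, W i j * (y i - y j) ^ 2 :=
    Finset.sum_nonneg fun i _ => Finset.sum_nonneg fun j _ => mul_nonneg (hW₀ i j) (sq_nonneg _)
  rw [hdiag, hoff]
  linarith

lemma Rmat_posDef_s0 (hW : W.IsSymm) (hW₀ : ∀ i j, 0 ≤ W i j) (hdeg : ∀ i, 0 < degVec W i)
    {ρ : ℝ} (hρ₀ : 0 ≤ ρ) (hρ₁ : ρ < 1) : (Rmat W ρ).PosDef := by
  refine .of_dotProduct_mulVec_pos (isHermitian_iff_isSymm.mpr (Rmat_isSymm hW ρ)) fun y hy => ?_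
  have hD := (posDef_diagonal_iff.mpr hdeg).dotProduct_mulVec_pos hy
  have hWD := dotProduct_mulVec_le_dotProduct_diagonal_degVec_mulVec hW hW₀ y
  rw [star_trivial] at hD ⊢
  rw [dotProduct_Rmat_mulVec]
  nlinarith

end Rmat

theorem concavity_of_T_general {n p : ℕ} (W : Matrix (Fin n) (Fin n) ℝ)
    (hWsymm : W.IsSymm) (hW01 : ∀ i j, W i j = 0 ∨ W i j = 1)
    (hdeg : ∀ i, 1 ≤ degVec W i)
    (F : Matrix (Fin n) (Fin (p + 1)) ℝ) (hF : F.rank = p + 1)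
    (x : Fin n → ℝ) :
    ConcaveOn ℝ (Set.Ioo (0 : ℝ) 1) (fun ρ => Tcrit W F x ρ) := by
  have hW₀ (i j) : 0 ≤ W i j := by rcases hW01 i j with h | h <;> simp [h]
  have hFinj : Function.Injective F.mulVec := mulVec_injective_of_rank_eq_card (by simpa using hF)
  have hM (ρ : ℝ) (hρ : ρ ∈ Set.Ioo (0 : ℝ) 1) : (Fᵀ * Rmat W ρ * F).PosDef := by
    simpa using (Rmat_posDef_s0 hWsymm hW₀ (fun i => one_pos.trans_le (hdeg i)) hρ.1.le
      hρ.2).conjTranspose_mul_mul_same hFinj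
  refine concaveOn_of_forall_le_of_exists_eq
    (g := fun c ρ => (x - F *ᵥ c) ⬝ᵥ (Rmat W ρ *ᵥ (x - F *ᵥ c)))
    (fun c => concaveOn_dotProduct_Rmat_mulVec (convex_Ioo 0 1) _)
    (fun ρ hρ c => dotProduct_schur_mulVec_le (Rmat_isSymm hWsymm ρ) (hM ρ hρ) x c)
    (fun ρ hρ => ⟨glsCoeff (Rmat W ρ) F x, dotProduct_mulVec_sub_glsCoeff (hM ρ hρ).isUnit x⟩)

/-- for fixed `x`, if every degree is at least 1 and `F` has full column
rank, then `ρ ↦ T(x,ρ)` is concave on `(0,1)`. -/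
theorem concavity_of_T {n p : ℕ} (W : Matrix (Fin n) (Fin n) ℝ)
    (hWsymm : W.IsSymm) (hW01 : ∀ i j, W i j = 0 ∨ W i j = 1) (hWdiag : ∀ i, W i i = 0)
    (hdeg : ∀ i, 1 ≤ degVec W i)
    (F : Matrix (Fin n) (Fin (p + 1)) ℝ) (hF : F.rank = p + 1)
    (x : Fin n → ℝ) :
    ConcaveOn ℝ (Set.Ioo (0 : ℝ) 1) (fun ρ => Tcrit W F x ρ) :=
  concavity_of_T_general W hWsymm hW01 hdeg F hF x
end

section
/- If every node has degree mᵢ ≥ 1 and 0 ≤ ρ < 1, then the matrix D − ρW is symmetric positive definite. -/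
/-!
Write `D - ρW = (1 - ρ)D + ρ(D - W)`. The first summand is positive definite because every degree
is positive, and the second is positive semidefinite because `D - W` is the graph Laplacian:
for symmetric `W ≥ 0`, `2 xᵀ(D - W)x = ∑ᵢⱼ Wᵢⱼ (xᵢ - xⱼ)²`.
-/

open Matrix

namespace Matrix

variable {ι R : Type*} [Fintype ι] [DecidableEq ι]

theorem dotProduct_diagonal_sum_sub_mulVec [CommRing R] (W : Matrix ι ι R) (x : ι → R) :
    x ⬝ᵥ ((diagonal fun i ↦ ∑ j, W i j) - W) *ᵥ x =
      ∑ i, ∑ j, W i j * (x i * x i - x i * x j) := by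
  rw [sub_mulVec, dotProduct_sub]
  simp only [dotProduct, mulVec_diagonal]
  simp only [mulVec, dotProduct, Finset.mul_sum, Finset.sum_mul, ← Finset.sum_sub_distrib]
  exact Finset.sum_congr rfl fun i _ ↦ Finset.sum_congr rfl fun j _ ↦ by ring

theorem two_mul_dotProduct_diagonal_sum_sub_mulVec [CommRing R] {W : Matrix ι ι R}
    (hW : W.IsSymm) (x : ι → R) :
    2 * (x ⬝ᵥ ((diagonal fun i ↦ ∑ j, W i j) - W) *ᵥ x) =
      ∑ i, ∑ j, W i j * (x i - x j) ^ 2 := by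
  have hswap : ∑ i, ∑ j, W i j * (x j * x j) = ∑ i, ∑ j, W i j * (x i * x i) := by
    rw [Finset.sum_comm]
    simp_rw [hW.apply]
  have hsplit : ∀ i j, W i j * (x i - x j) ^ 2 =
      2 * (W i j * (x i * x i - x i * x j)) + (W i j * (x j * x j) - W i j * (x i * x i)) :=
    fun i j ↦ by ring
  simp only [dotProduct_diagonal_sum_sub_mulVec, hsplit, Finset.sum_add_distrib,
    Finset.sum_sub_distrib, hswap, ← Finset.mul_sum, sub_self, add_zero]

variable [CommRing R] [LinearOrder R] [IsStrictOrderedRing R] [StarRing R] [TrivialStar R]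

theorem posSemidef_diagonal_sum_sub {W : Matrix ι ι R} (hW : W.IsSymm)
    (hW₀ : ∀ i j, 0 ≤ W i j) : ((diagonal fun i ↦ ∑ j, W i j) - W).PosSemidef := by
  refine .of_dotProduct_mulVec_nonneg ?_ fun x ↦ ?_
  · rw [isHermitian_iff_isSymm, IsSymm, transpose_sub, diagonal_transpose, hW]
  · have hsum : 0 ≤ ∑ i, ∑ j, W i j * (x i - x j) ^ 2 :=
      Finset.sum_nonneg fun i _ ↦ Finset.sum_nonneg fun j _ ↦ mul_nonneg (hW₀ i j) (sq_nonneg _)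
    rw [star_trivial]
    linarith [two_mul_dotProduct_diagonal_sum_sub_mulVec hW x]

theorem posDef_diagonal_sum_sub_smul [StarOrderedRing R] {W : Matrix ι ι R} (hW : W.IsSymm)
    (hW₀ : ∀ i j, 0 ≤ W i j) (hdeg : ∀ i, 0 < ∑ j, W i j) {ρ : R} (hρ₀ : 0 ≤ ρ) (hρ₁ : ρ < 1) :
    ((diagonal fun i ↦ ∑ j, W i j) - ρ • W).PosDef := by
  have hsplit : (diagonal fun i ↦ ∑ j, W i j) - ρ • W =
      (1 - ρ) • (diagonal fun i ↦ ∑ j, W i j) + ρ • ((diagonal fun i ↦ ∑ j, W i j) - W) := by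
    module
  rw [hsplit]
  exact ((PosDef.diagonal hdeg).smul (sub_pos.2 hρ₁)).add_posSemidef
    ((posSemidef_diagonal_sum_sub hW hW₀).smul hρ₀)

end Matrix

theorem Rmat_posDef_general {n : ℕ} (W : Matrix (Fin n) (Fin n) ℝ)
    (hWsymm : W.IsSymm) (hW01 : ∀ i j, W i j = 0 ∨ W i j = 1)
    (hdeg : ∀ i, 1 ≤ degVec W i)
    (ρ : ℝ) (hρ0 : 0 ≤ ρ) (hρ1 : ρ < 1) :
    (Rmat W ρ).IsSymm ∧ (Rmat W ρ).PosDef := by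
  have hW₀ : ∀ i j, 0 ≤ W i j := fun i j ↦ by rcases hW01 i j with h | h <;> simp [h]
  have hpos : (Rmat W ρ).PosDef :=
    posDef_diagonal_sum_sub_smul hWsymm hW₀ (fun i ↦ one_pos.trans_le (hdeg i)) hρ0 hρ1
  exact ⟨isHermitian_iff_isSymm.mp hpos.isHermitian, hpos⟩

/-- if every degree is at least 1 and `0 ≤ ρ < 1`, then `D - ρW` is
symmetric positive definite. -/
theorem Rmat_posDef {n : ℕ} (W : Matrix (Fin n) (Fin n) ℝ)
    (hWsymm : W.IsSymm) (hW01 : ∀ i j, W i j = 0 ∨ W i j = 1) (hWdiag : ∀ i, W i i = 0)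
    (hdeg : ∀ i, 1 ≤ degVec W i)
    (ρ : ℝ) (hρ0 : 0 ≤ ρ) (hρ1 : ρ < 1) :
    (Rmat W ρ).IsSymm ∧ (Rmat W ρ).PosDef :=
  Rmat_posDef_general W hWsymm hW01 hdeg ρ hρ0 hρ1
end

section
/- Assume every node has degree mᵢ ≥ 1, F has full column rank, ρ₀ ∈ (0,1), and x ∈ {−1,1}ⁿ. Let λ_min > 0 and λ_max be the smallest and largest eigenvalues of the symmetric positive definite matrix D − ρ₀W, let r be the spectral radius of W (the maximum of the absolute values of the eigenvalues of the symmetric matrix W), and let s = s(ρ₀) = [Iₙ − F(Fᵀ(D−ρ₀W)F)⁻¹Fᵀ(D−ρ₀W)]x. Then sᵀ W F [Fᵀ(D−ρ₀W)F]⁻¹ Fᵀ W s ≤ min{ n·λ_max , (1+ρ₀)·m } · r² / λ_min². -/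
open Matrix

/-- The residual vector `s(ρ) = [Iₙ - F(Fᵀ(D-ρW)F)⁻¹Fᵀ(D-ρW)]x`. -/
noncomputable def sresid {n p : ℕ} (W : Matrix (Fin n) (Fin n) ℝ)
    (F : Matrix (Fin n) (Fin (p + 1)) ℝ) (x : Fin n → ℝ) (ρ : ℝ) : Fin n → ℝ :=
  ((1 : Matrix (Fin n) (Fin n) ℝ) - F * (Fᵀ * Rmat W ρ * F)⁻¹ * Fᵀ * Rmat W ρ).mulVec x

/-!
With `R = D - ρ₀W`, `B = FᵀRF` and `P = FB⁻¹Fᵀ`, we have `PRP = P`, so `y ↦ yᵀPy` is the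
`R`-energy of `Py`; hence `λ_min yᵀPy ≤ ‖y‖²`, and `s = x - PRx` has `R`-energy at most that of
`x`. The bound then follows from the chain
`λ_min² · sᵀWPWs ≤ λ_min ‖Ws‖² ≤ λ_min r² ‖s‖² ≤ r² sᵀRs ≤ r² xᵀRx`,
where `xᵀRx ≤ λ_max ‖x‖² = n λ_max` and `xᵀRx = m - ρ₀ xᵀWx ≤ (1 + ρ₀) m`.
-/

open scoped MatrixOrder

namespace Matrix

variable {ι κ : Type*} [Fintype ι] [Fintype κ]

lemma IsSymm.dotProduct_mulVec_eq {α : Type*} [CommSemiring α] {A : Matrix ι ι α}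
    (hA : A.IsSymm) (v w : ι → α) : v ⬝ᵥ A *ᵥ w = A *ᵥ v ⬝ᵥ w := by
  rw [dotProduct_mulVec, ← mulVec_transpose, hA.eq]

lemma IsSymm.dotProduct_mul_mul_mulVec {α : Type*} [CommSemiring α] {A : Matrix ι ι α}
    (hA : A.IsSymm) (M : Matrix ι ι α) (v : ι → α) :
    v ⬝ᵥ (A * M * A) *ᵥ v = A *ᵥ v ⬝ᵥ M *ᵥ (A *ᵥ v) := by
  rw [← mulVec_mulVec, ← mulVec_mulVec, hA.dotProduct_mulVec_eq]

lemma dotProduct_mulVec_le_of_le {A B : Matrix ι ι ℝ} (h : A ≤ B) (v : ι → ℝ) :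
    v ⬝ᵥ A *ᵥ v ≤ v ⬝ᵥ B *ᵥ v := by
  simpa [sub_mulVec] using (le_iff.mp h).dotProduct_mulVec_nonneg v

section Spectral

variable [DecidableEq ι] {A : Matrix ι ι ℝ}

lemma IsHermitian.mul_dotProduct_self_le (hA : A.IsHermitian) {c : ℝ}
    (h : ∀ i, c ≤ hA.eigenvalues i) (v : ι → ℝ) : c * (v ⬝ᵥ v) ≤ v ⬝ᵥ A *ᵥ v := by
  have hcA : algebraMap ℝ _ c ≤ A := by
    rw [algebraMap_le_iff_le_spectrum (ha := hA.isSelfAdjoint),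
      hA.spectrum_real_eq_range_eigenvalues]
    rintro _ ⟨i, rfl⟩
    exact h i
  simpa [Algebra.algebraMap_eq_smul_one, smul_mulVec] using dotProduct_mulVec_le_of_le hcA v

lemma IsHermitian.dotProduct_mulVec_le (hA : A.IsHermitian) {c : ℝ}
    (h : ∀ i, hA.eigenvalues i ≤ c) (v : ι → ℝ) : v ⬝ᵥ A *ᵥ v ≤ c * (v ⬝ᵥ v) := by
  have hAc : A ≤ algebraMap ℝ _ c := by
    rw [le_algebraMap_iff_spectrum_le (ha := hA.isSelfAdjoint),
      hA.spectrum_real_eq_range_eigenvalues]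
    rintro _ ⟨i, rfl⟩
    exact h i
  simpa [Algebra.algebraMap_eq_smul_one, smul_mulVec] using dotProduct_mulVec_le_of_le hAc v

lemma IsHermitian.mulVec_dotProduct_mulVec_le (hA : A.IsHermitian) {r : ℝ}
    (h : ∀ i, |hA.eigenvalues i| ≤ r) (v : ι → ℝ) :
    A *ᵥ v ⬝ᵥ A *ᵥ v ≤ r ^ 2 * (v ⬝ᵥ v) := by
  have hA2 : A ^ 2 ≤ algebraMap ℝ _ (r ^ 2) := by
    rw [← cfc_pow_id (R := ℝ) A 2 hA.isSelfAdjoint, cfc_le_algebraMap_iff _ _ A,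
      hA.spectrum_real_eq_range_eigenvalues]
    rintro _ ⟨i, rfl⟩
    exact sq_le_sq.mpr ((h i).trans (le_abs_self r))
  rw [← (isHermitian_iff_isSymm.mp hA).dotProduct_mulVec_eq, mulVec_mulVec, ← sq]
  simpa [Algebra.algebraMap_eq_smul_one, smul_mulVec] using dotProduct_mulVec_le_of_le hA2 v

end Spectral

section GramInvConj

variable [DecidableEq κ]

noncomputable def gramInvConj {α : Type*} [CommRing α] (F : Matrix ι κ α) (R : Matrix ι ι α) :
    Matrix ι ι α :=
  F * (Fᵀ * R * F)⁻¹ * Fᵀ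

lemma isSymm_gramInvConj {α : Type*} [CommRing α] {R : Matrix ι ι α} (hR : R.IsSymm)
    (F : Matrix ι κ α) : (gramInvConj F R).IsSymm := by
  have hB : (Fᵀ * R * F).IsSymm := by
    simp [IsSymm, transpose_mul, hR.eq, Matrix.mul_assoc]
  rw [IsSymm, gramInvConj, transpose_mul, transpose_mul, transpose_transpose,
    transpose_nonsing_inv, hB.eq]
  simp only [Matrix.mul_assoc]

-- No invertibility is needed: if `FᵀRF` is singular, its `⁻¹` is `0` and both sides vanish.
lemma gramInvConj_mul_mul_self {α : Type*} [CommRing α] (F : Matrix ι κ α)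
    (R : Matrix ι ι α) : gramInvConj F R * R * gramInvConj F R = gramInvConj F R := by
  have key : (Fᵀ * R * F)⁻¹ * (Fᵀ * R * F) * (Fᵀ * R * F)⁻¹ = (Fᵀ * R * F)⁻¹ := by
    rcases nonsing_inv_cancel_or_zero (Fᵀ * R * F) with ⟨h, -⟩ | h <;> simp [h]
  calc F * (Fᵀ * R * F)⁻¹ * Fᵀ * R * (F * (Fᵀ * R * F)⁻¹ * Fᵀ)
      = F * ((Fᵀ * R * F)⁻¹ * (Fᵀ * R * F) * (Fᵀ * R * F)⁻¹) * Fᵀ := by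
        simp only [Matrix.mul_assoc]
    _ = F * (Fᵀ * R * F)⁻¹ * Fᵀ := by rw [key]

variable {F : Matrix ι κ ℝ} {R : Matrix ι ι ℝ}

lemma dotProduct_mulVec_gramInvConj (hR : R.IsSymm) (y : ι → ℝ) :
    gramInvConj F R *ᵥ y ⬝ᵥ R *ᵥ (gramInvConj F R *ᵥ y) = y ⬝ᵥ gramInvConj F R *ᵥ y := by
  rw [← (isSymm_gramInvConj hR F).dotProduct_mulVec_eq, mulVec_mulVec, mulVec_mulVec,
    gramInvConj_mul_mul_self]

lemma mul_dotProduct_mulVec_gramInvConj_le (hR : R.IsSymm) {c : ℝ} (hc : 0 ≤ c)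
    (hRc : ∀ y, c * (y ⬝ᵥ y) ≤ y ⬝ᵥ R *ᵥ y) (v : ι → ℝ) :
    c * (v ⬝ᵥ gramInvConj F R *ᵥ v) ≤ v ⬝ᵥ v := by
  set g := gramInvConj F R *ᵥ v
  have hg : c * (g ⬝ᵥ g) ≤ v ⬝ᵥ g := by
    have := hRc g
    rwa [dotProduct_mulVec_gramInvConj hR] at this
  -- expand `0 ≤ ‖v - c • g‖²` and use `c² ‖g‖² ≤ c (v ⬝ g)`
  have hsq : 0 ≤ (v - c • g) ⬝ᵥ (v - c • g) := by
    simpa using dotProduct_star_self_nonneg (v - c • g)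
  simp only [sub_dotProduct, dotProduct_sub, smul_dotProduct, dotProduct_smul, smul_eq_mul,
    dotProduct_comm g v] at hsq
  nlinarith [mul_le_mul_of_nonneg_left hg hc]

variable [DecidableEq ι]

lemma dotProduct_mulVec_residual (hR : R.IsSymm) (x : ι → ℝ) :
    (1 - gramInvConj F R * R) *ᵥ x ⬝ᵥ R *ᵥ ((1 - gramInvConj F R * R) *ᵥ x) =
      x ⬝ᵥ R *ᵥ x - R *ᵥ x ⬝ᵥ gramInvConj F R *ᵥ (R *ᵥ x) := by
  set g := gramInvConj F R *ᵥ (R *ᵥ x)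
  have hRg : x ⬝ᵥ R *ᵥ g = R *ᵥ x ⬝ᵥ g := hR.dotProduct_mulVec_eq x g
  have hgR : g ⬝ᵥ R *ᵥ x = R *ᵥ x ⬝ᵥ g := dotProduct_comm _ _
  have hgRg : g ⬝ᵥ R *ᵥ g = R *ᵥ x ⬝ᵥ g := dotProduct_mulVec_gramInvConj hR (R *ᵥ x)
  have hs : (1 - gramInvConj F R * R) *ᵥ x = x - g := by
    rw [sub_mulVec, one_mulVec, ← mulVec_mulVec]
  rw [hs, mulVec_sub, dotProduct_sub, sub_dotProduct, sub_dotProduct, hRg, hgR, hgRg]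
  ring

lemma PosSemidef.dotProduct_mulVec_residual_le (hR : R.PosSemidef) (x : ι → ℝ) :
    (1 - gramInvConj F R * R) *ᵥ x ⬝ᵥ R *ᵥ ((1 - gramInvConj F R * R) *ᵥ x) ≤
      x ⬝ᵥ R *ᵥ x := by
  have hR' : R.IsSymm := isHermitian_iff_isSymm.mp hR.isHermitian
  rw [dotProduct_mulVec_residual hR', sub_le_self_iff, ← dotProduct_mulVec_gramInvConj hR']
  simpa using hR.dotProduct_mulVec_nonneg (gramInvConj F R *ᵥ (R *ᵥ x))

end GramInvConj

end Matrix

lemma dotProduct_self_eq_card_of_sign {ι : Type*} [Fintype ι] {x : ι → ℝ}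
    (hx : ∀ i, x i = 1 ∨ x i = -1) : x ⬝ᵥ x = Fintype.card ι := by
  simp [dotProduct, fun i => mul_self_eq_one_iff.mpr (hx i)]

lemma dotProduct_mulVec_Rmat_le {n : ℕ} {W : Matrix (Fin n) (Fin n) ℝ} (hW : ∀ i j, 0 ≤ W i j)
    {ρ : ℝ} (hρ : 0 ≤ ρ) {x : Fin n → ℝ} (hx : ∀ i, x i = 1 ∨ x i = -1) :
    x ⬝ᵥ Rmat W ρ *ᵥ x ≤ (1 + ρ) * ∑ i, degVec W i := by
  have hD : x ⬝ᵥ diagonal (degVec W) *ᵥ x = ∑ i, degVec W i := by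
    refine Finset.sum_congr rfl fun i _ => ?_
    rcases hx i with h | h <;> simp [mulVec_diagonal, h]
  have hWx : -∑ i, degVec W i ≤ x ⬝ᵥ W *ᵥ x := by
    simp only [dotProduct, mulVec, degVec, ← Finset.sum_neg_distrib, Finset.mul_sum]
    gcongr with i _ j _
    rcases hx i with hi | hi <;> rcases hx j with hj | hj <;> rw [hi, hj] <;> linarith [hW i j]
  rw [Rmat, sub_mulVec, dotProduct_sub, smul_mulVec, dotProduct_smul, smul_eq_mul, hD]
  nlinarith

theorem sandwich_bound_general {n p : ℕ} (W : Matrix (Fin n) (Fin n) ℝ)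
    (hW01 : ∀ i j, W i j = 0 ∨ W i j = 1)
    (F : Matrix (Fin n) (Fin (p + 1)) ℝ)
    (ρ₀ : ℝ) (hρ₀ : ρ₀ ∈ Set.Ioo (0 : ℝ) 1)
    (x : Fin n → ℝ) (hx : ∀ i, x i = 1 ∨ x i = -1)
    (hA : (Rmat W ρ₀).IsHermitian) (hWh : W.IsHermitian)
    (lammin lammax r : ℝ)
    (hmin : IsLeast (Set.range hA.eigenvalues) lammin)
    (hminpos : 0 < lammin)
    (hmax : IsGreatest (Set.range hA.eigenvalues) lammax)
    (hr : IsGreatest (Set.range fun i => |hWh.eigenvalues i|) r) :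
    sresid W F x ρ₀ ⬝ᵥ
        (W * F * (Fᵀ * Rmat W ρ₀ * F)⁻¹ * Fᵀ * W).mulVec (sresid W F x ρ₀) ≤
      min ((n : ℝ) * lammax) ((1 + ρ₀) * ∑ i, degVec W i) * r ^ 2 / lammin ^ 2 := by
  set R := Rmat W ρ₀
  set s := sresid W F x ρ₀
  set M := min ((n : ℝ) * lammax) ((1 + ρ₀) * ∑ i, degVec W i)
  have hRmin : ∀ y, lammin * (y ⬝ᵥ y) ≤ y ⬝ᵥ R *ᵥ y :=
    hA.mul_dotProduct_self_le fun i => hmin.2 ⟨i, rfl⟩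
  have hR : R.PosSemidef := hA.posSemidef_iff_eigenvalues_nonneg.mpr fun i =>
    (hminpos.trans_le (hmin.2 ⟨i, rfl⟩)).le
  have hxR : x ⬝ᵥ R *ᵥ x ≤ M := by
    refine le_min ?_ (dotProduct_mulVec_Rmat_le (fun i j => ?_) hρ₀.1.le hx)
    · simpa [dotProduct_self_eq_card_of_sign hx, mul_comm] using
        hA.dotProduct_mulVec_le (fun i => hmax.2 ⟨i, rfl⟩) x
    · rcases hW01 i j with h | h <;> simp [h]
  have hsR : s ⬝ᵥ R *ᵥ s ≤ x ⬝ᵥ R *ᵥ x := hR.dotProduct_mulVec_residual_le x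
  have hWs : W *ᵥ s ⬝ᵥ W *ᵥ s ≤ r ^ 2 * (s ⬝ᵥ s) :=
    hWh.mulVec_dotProduct_mulVec_le (fun i => hr.2 ⟨i, rfl⟩) s
  have hPWs : lammin * (W *ᵥ s ⬝ᵥ gramInvConj F R *ᵥ (W *ᵥ s)) ≤ W *ᵥ s ⬝ᵥ W *ᵥ s :=
    mul_dotProduct_mulVec_gramInvConj_le (isHermitian_iff_isSymm.mp hA) hminpos.le hRmin _
  have hlhs : s ⬝ᵥ (W * F * (Fᵀ * R * F)⁻¹ * Fᵀ * W) *ᵥ s =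
      W *ᵥ s ⬝ᵥ gramInvConj F R *ᵥ (W *ᵥ s) := by
    rw [← (isHermitian_iff_isSymm.mp hWh).dotProduct_mul_mul_mulVec, gramInvConj]
    simp only [Matrix.mul_assoc]
  rw [hlhs, le_div_iff₀ (by positivity)]
  calc W *ᵥ s ⬝ᵥ gramInvConj F R *ᵥ (W *ᵥ s) * lammin ^ 2
      = lammin * (lammin * (W *ᵥ s ⬝ᵥ gramInvConj F R *ᵥ (W *ᵥ s))) := by ring
    _ ≤ lammin * (r ^ 2 * (s ⬝ᵥ s)) := mul_le_mul_of_nonneg_left (hPWs.trans hWs) hminpos.le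
    _ = r ^ 2 * (lammin * (s ⬝ᵥ s)) := by ring
    _ ≤ r ^ 2 * M :=
        mul_le_mul_of_nonneg_left ((hRmin s).trans (hsR.trans hxR)) (sq_nonneg r)
    _ = M * r ^ 2 := mul_comm _ _

/-- eigenvalue bound on `sᵀ W F [Fᵀ(D-ρ₀W)F]⁻¹ Fᵀ W s` for `x ∈ {-1,1}ⁿ`,
where `λmin > 0`, `λmax` are the smallest/largest eigenvalues of `D-ρ₀W` and `r` is the
spectral radius of `W`. -/
theorem sandwich_bound {n p : ℕ} (W : Matrix (Fin n) (Fin n) ℝ)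
    (hWsymm : W.IsSymm) (hW01 : ∀ i j, W i j = 0 ∨ W i j = 1) (hWdiag : ∀ i, W i i = 0)
    (hdeg : ∀ i, 1 ≤ degVec W i)
    (F : Matrix (Fin n) (Fin (p + 1)) ℝ) (hF : F.rank = p + 1)
    (ρ₀ : ℝ) (hρ₀ : ρ₀ ∈ Set.Ioo (0 : ℝ) 1)
    (x : Fin n → ℝ) (hx : ∀ i, x i = 1 ∨ x i = -1)
    (hA : (Rmat W ρ₀).IsHermitian) (hWh : W.IsHermitian)
    (lammin lammax r : ℝ)
    (hmin : IsLeast (Set.range hA.eigenvalues) lammin)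
    (hminpos : 0 < lammin)
    (hmax : IsGreatest (Set.range hA.eigenvalues) lammax)
    (hr : IsGreatest (Set.range fun i => |hWh.eigenvalues i|) r) :
    sresid W F x ρ₀ ⬝ᵥ
        (W * F * (Fᵀ * Rmat W ρ₀ * F)⁻¹ * Fᵀ * W).mulVec (sresid W F x ρ₀) ≤
      min ((n : ℝ) * lammax) ((1 + ρ₀) * ∑ i, degVec W i) * r ^ 2 / lammin ^ 2 :=
  sandwich_bound_general W hW01 F ρ₀ hρ₀ x hx hA hWh lammin lammax r hmin hminpos hmax hr
end

section
/- Let A and B be symmetric n×n real matrices, each having at least one nonzero off-diagonal entry. Then the correlation of the random variables xᵀAx and xᵀBx equals (Σ_{i<j} A_{ij}B_{ij}) / (√(Σ_{i<j} A_{ij}²) · √(Σ_{i<j} B_{ij}²)), where the correlation of U and V is cov(U,V)/(√Var(U)·√Var(V)). -/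
/-!
Since `xᵢ² = 1` almost surely, `xᵀMx = tr M + 2 ∑_{i<j} M_{ij} xᵢxⱼ` for symmetric `M`. The
Walsh products `χ_s = ∏_{i ∈ s} xᵢ` satisfy `χ_s χ_t = χ_{s ∆ t}` and, by independence,
`E χ_s = [s = ∅]`; so the products `xᵢxⱼ` with `i < j` are centred and orthonormal. Hence
`cov(xᵀAx, xᵀBx) = 4 ∑_{i<j} A_{ij}B_{ij}`, and the factors `4` cancel in the correlation.
-/

open MeasureTheory ProbabilityTheory Matrix

/-- The random quadratic form `ω ↦ xᵀ M x = ∑_{i,j} M_{ij} xᵢ(ω) xⱼ(ω)`. -/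
noncomputable def quadRV {Ω : Type*} {n : ℕ} (M : Matrix (Fin n) (Fin n) ℝ)
    (x : Fin n → Ω → ℝ) (ω : Ω) : ℝ :=
  ∑ i, ∑ j, M i j * x i ω * x j ω

/-- The sum over pairs `i < j` of `A_{ij} B_{ij}`. -/
noncomputable def offDiagSum {n : ℕ} (A B : Matrix (Fin n) (Fin n) ℝ) : ℝ :=
  ∑ q ∈ Finset.univ.filter (fun q : Fin n × Fin n => q.1 < q.2), A q.1 q.2 * B q.1 q.2

open Finset
open scoped symmDiff

theorem Finset.prod_mul_prod_eq_prod_symmDiff {ι M : Type*} [DecidableEq ι] [CommMonoid M]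
    {f : ι → M} {s t : Finset ι} (hf : ∀ i ∈ s ∩ t, f i * f i = 1) :
    (∏ i ∈ s, f i) * ∏ i ∈ t, f i = ∏ i ∈ s ∆ t, f i := by
  have hinter : (∏ i ∈ s ∩ t, f i) * ∏ i ∈ s ∩ t, f i = 1 := by
    rw [← prod_mul_distrib]; exact prod_eq_one hf
  rw [← prod_union_inter, symmDiff_eq_sup_sdiff_inf, ← prod_sdiff (inter_subset_union (s := s)),
    mul_assoc]
  simp [hinter]

theorem Finset.sum_sum_eq_sum_diag_add_sum_lt {ι M : Type*} [Fintype ι] [LinearOrder ι]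
    [AddCommMonoid M] (f : ι → ι → M) :
    ∑ i, ∑ j, f i j =
      ∑ i, f i i + ∑ p ∈ univ.filter (fun p : ι × ι => p.1 < p.2), (f p.1 p.2 + f p.2 p.1) := by
  have htri : ∀ i j, f i j =
      (if i = j then f i j else 0) +
        ((if i < j then f i j else 0) + if j < i then f i j else 0) := by
    intro i j
    rcases lt_trichotomy i j with h | rfl | h
    · simp [h, h.ne, h.not_gt]
    · simp
    · simp [h, h.ne', h.not_gt]
  have hlower : ∑ i, ∑ j, (if j < i then f i j else 0) = ∑ i, ∑ j, if i < j then f j i else 0 :=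
    sum_comm
  rw [sum_filter, ← univ_product_univ, sum_product]
  simp only [ite_add_zero, sum_add_distrib]
  conv_lhs => enter [2, i, 2, j]; rw [htri i j]
  simp only [sum_add_distrib, sum_ite_eq, mem_univ, if_true, hlower]

section Rademacher

variable {Ω : Type*} [MeasurableSpace Ω] {μ : Measure Ω} [IsProbabilityMeasure μ] {X : Ω → ℝ}

theorem ae_eq_one_or_eq_neg_one_of_measure_eq_half (hX : Measurable X)
    (h1 : μ {ω | X ω = 1} = 1 / 2) (h2 : μ {ω | X ω = -1} = 1 / 2) :
    ∀ᵐ ω ∂μ, X ω = 1 ∨ X ω = -1 := by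
  have hdisj : Disjoint {ω | X ω = 1} {ω | X ω = -1} :=
    Set.disjoint_left.mpr fun ω (h : X ω = 1) (h' : X ω = -1) => by linarith
  have hunion : μ ({ω | X ω = 1} ∪ {ω | X ω = -1}) = 1 := by
    rw [measure_union hdisj (hX (measurableSet_singleton _)), h1, h2, one_div,
      ENNReal.inv_two_add_inv_two]
  exact (ae_iff_measure_eq ((hX (measurableSet_singleton _)).union
    (hX (measurableSet_singleton _))).nullMeasurableSet).mpr (hunion.trans measure_univ.symm)

theorem integral_eq_zero_of_measure_eq_half (hX : Measurable X) (h1 : μ {ω | X ω = 1} = 1 / 2)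
    (h2 : μ {ω | X ω = -1} = 1 / 2) : ∫ ω, X ω ∂μ = 0 := by
  have hS : MeasurableSet {ω | X ω = 1} := hX (measurableSet_singleton _)
  have hX_eq : X =ᵐ[μ] fun ω => {ω | X ω = 1}.indicator (fun _ => (2 : ℝ)) ω - 1 := by
    filter_upwards [ae_eq_one_or_eq_neg_one_of_measure_eq_half hX h1 h2] with ω hω
    rcases hω with h | h <;> norm_num [Set.indicator, h]
  rw [integral_congr_ae hX_eq, integral_sub ((integrable_const _).indicator hS)
    (integrable_const _), integral_indicator_const _ hS, measureReal_def, h1]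
  norm_num

end Rademacher

structure IsRademacherFamily {Ω ι : Type*} [MeasurableSpace Ω] (x : ι → Ω → ℝ)
    (μ : Measure Ω) : Prop where
  measurable : ∀ i, Measurable (x i)
  iIndepFun : iIndepFun x μ
  measure_eq_one : ∀ i, μ {ω | x i ω = 1} = 1 / 2
  measure_eq_neg_one : ∀ i, μ {ω | x i ω = -1} = 1 / 2

def walsh {Ω ι : Type*} (x : ι → Ω → ℝ) (s : Finset ι) (ω : Ω) : ℝ := ∏ i ∈ s, x i ω

theorem walsh_pair {Ω ι : Type*} [DecidableEq ι] (x : ι → Ω → ℝ) {a b : ι} (hab : a ≠ b)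
    (ω : Ω) : walsh x {a, b} ω = x a ω * x b ω :=
  prod_pair hab

namespace IsRademacherFamily

variable {Ω ι : Type*} [MeasurableSpace Ω] {μ : Measure Ω} [IsProbabilityMeasure μ]
  {x : ι → Ω → ℝ}

theorem ae_eq_one_or_eq_neg_one (hx : IsRademacherFamily x μ) (i : ι) :
    ∀ᵐ ω ∂μ, x i ω = 1 ∨ x i ω = -1 :=
  ae_eq_one_or_eq_neg_one_of_measure_eq_half (hx.measurable i) (hx.measure_eq_one i)
    (hx.measure_eq_neg_one i)

theorem integral_eq_zero (hx : IsRademacherFamily x μ) (i : ι) : ∫ ω, x i ω ∂μ = 0 :=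
  integral_eq_zero_of_measure_eq_half (hx.measurable i) (hx.measure_eq_one i)
    (hx.measure_eq_neg_one i)

theorem ae_mul_self_eq_one (hx : IsRademacherFamily x μ) (i : ι) :
    ∀ᵐ ω ∂μ, x i ω * x i ω = 1 := by
  filter_upwards [hx.ae_eq_one_or_eq_neg_one i] with ω hω
  rcases hω with h | h <;> simp [h]

theorem integrable_walsh (hx : IsRademacherFamily x μ) (s : Finset ι) :
    Integrable (walsh x s) μ := by
  refine Integrable.of_bound
    (Finset.measurable_prod s fun i _ => hx.measurable i).aestronglyMeasurable 1 ?_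
  have hsign : ∀ᵐ ω ∂μ, ∀ i ∈ s, x i ω = 1 ∨ x i ω = -1 :=
    (Filter.eventually_all_finset s).mpr fun i _ => hx.ae_eq_one_or_eq_neg_one i
  filter_upwards [hsign] with ω hω
  rw [walsh, Real.norm_eq_abs, abs_prod]
  refine (prod_eq_one fun i hi => ?_).le
  rcases hω i hi with h | h <;> simp [h]

theorem integral_walsh [DecidableEq ι] (hx : IsRademacherFamily x μ) (s : Finset ι) :
    ∫ ω, walsh x s ω ∂μ = if s = ∅ then 1 else 0 := by
  rcases s.eq_empty_or_nonempty with rfl | ⟨a, ha⟩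
  · simp [walsh]
  have hsplit : walsh x s = (∏ j ∈ s.erase a, x j) * x a := by
    ext ω; rw [walsh, Pi.mul_apply, prod_apply, prod_erase_mul s _ ha]
  have hindep : IndepFun (∏ j ∈ s.erase a, x j) (x a) μ :=
    hx.iIndepFun.indepFun_finsetProd_of_notMem hx.measurable (notMem_erase a s)
  rw [if_neg (ne_empty_of_mem ha), hsplit]
  simp only [Pi.mul_apply]
  rw [hindep.integral_fun_mul_eq_mul_integral
    (Finset.aestronglyMeasurable_prod _ fun i _ => (hx.measurable i).aestronglyMeasurable)
    (hx.measurable a).aestronglyMeasurable, hx.integral_eq_zero a, mul_zero]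

theorem walsh_mul_walsh_ae_eq [DecidableEq ι] (hx : IsRademacherFamily x μ) (s t : Finset ι) :
    walsh x s * walsh x t =ᵐ[μ] walsh x (s ∆ t) := by
  have hsq : ∀ᵐ ω ∂μ, ∀ i ∈ s ∩ t, x i ω * x i ω = 1 :=
    (Filter.eventually_all_finset _).mpr fun i _ => hx.ae_mul_self_eq_one i
  filter_upwards [hsq] with ω hω
  exact prod_mul_prod_eq_prod_symmDiff hω

theorem integrable_walsh_mul_walsh [DecidableEq ι] (hx : IsRademacherFamily x μ)
    (s t : Finset ι) : Integrable (walsh x s * walsh x t) μ :=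
  (hx.integrable_walsh _).congr (hx.walsh_mul_walsh_ae_eq s t).symm

theorem integral_walsh_mul_walsh [DecidableEq ι] (hx : IsRademacherFamily x μ)
    (s t : Finset ι) : ∫ ω, walsh x s ω * walsh x t ω ∂μ = if s = t then 1 else 0 := by
  refine (integral_congr_ae (hx.walsh_mul_walsh_ae_eq s t)).trans ?_
  rw [hx.integral_walsh]
  exact if_congr symmDiff_eq_bot rfl rfl

end IsRademacherFamily

theorem Finset.pair_eq_pair_iff_of_lt {ι : Type*} [LinearOrder ι] {a b c d : ι} (hab : a < b)
    (hcd : c < d) : ({a, b} : Finset ι) = {c, d} ↔ a = c ∧ b = d := by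
  rw [← coe_inj, coe_pair, coe_pair, Set.pair_eq_pair_iff]
  refine ⟨?_, Or.inl⟩
  rintro (h | ⟨rfl, rfl⟩)
  · exact h
  · exact absurd hab hcd.not_gt

section QuadraticForm

variable {Ω : Type*} {n : ℕ}

def offDiagForm (M : Matrix (Fin n) (Fin n) ℝ) (x : Fin n → Ω → ℝ) (ω : Ω) : ℝ :=
  ∑ p ∈ univ.filter (fun p : Fin n × Fin n => p.1 < p.2), M p.1 p.2 * walsh x {p.1, p.2} ω

theorem quadRV_eq_trace_add_offDiagForm {M : Matrix (Fin n) (Fin n) ℝ} (hM : M.IsSymm)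
    {x : Fin n → Ω → ℝ} {ω : Ω} (hω : ∀ i, x i ω * x i ω = 1) :
    quadRV M x ω = M.trace + 2 * offDiagForm M x ω := by
  rw [quadRV, sum_sum_eq_sum_diag_add_sum_lt, offDiagForm, mul_sum, trace]
  congr 1
  · exact sum_congr rfl fun i _ => by rw [mul_assoc, hω, mul_one, diag_apply]
  · refine sum_congr rfl fun p hp => ?_
    rw [walsh_pair x (mem_filter.mp hp).2.ne, hM.apply p.1 p.2]
    ring

theorem offDiagForm_mul_offDiagForm (M N : Matrix (Fin n) (Fin n) ℝ) (x : Fin n → Ω → ℝ)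
    (ω : Ω) : offDiagForm M x ω * offDiagForm N x ω =
      ∑ p ∈ univ.filter (fun p : Fin n × Fin n => p.1 < p.2),
        ∑ q ∈ univ.filter (fun p : Fin n × Fin n => p.1 < p.2),
          M p.1 p.2 * N q.1 q.2 * (walsh x {p.1, p.2} ω * walsh x {q.1, q.2} ω) := by
  rw [offDiagForm, offDiagForm, sum_mul_sum]
  exact sum_congr rfl fun _ _ => sum_congr rfl fun _ _ => by ring

variable [MeasurableSpace Ω] {μ : Measure Ω} [IsProbabilityMeasure μ] {x : Fin n → Ω → ℝ}

theorem IsRademacherFamily.quadRV_ae_eq (hx : IsRademacherFamily x μ)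
    {M : Matrix (Fin n) (Fin n) ℝ} (hM : M.IsSymm) :
    quadRV M x =ᵐ[μ] fun ω => M.trace + 2 * offDiagForm M x ω := by
  filter_upwards [ae_all_iff.mpr hx.ae_mul_self_eq_one] with ω hω
  exact quadRV_eq_trace_add_offDiagForm hM hω

theorem IsRademacherFamily.integrable_offDiagForm (hx : IsRademacherFamily x μ)
    (M : Matrix (Fin n) (Fin n) ℝ) : Integrable (offDiagForm M x) μ :=
  integrable_finsetSum _ fun _ _ => (hx.integrable_walsh _).const_mul _

theorem IsRademacherFamily.integral_offDiagForm (hx : IsRademacherFamily x μ)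
    (M : Matrix (Fin n) (Fin n) ℝ) : ∫ ω, offDiagForm M x ω ∂μ = 0 := by
  unfold offDiagForm
  rw [integral_finsetSum _ fun _ _ => (hx.integrable_walsh _).const_mul _]
  refine sum_eq_zero fun p _ => ?_
  rw [integral_const_mul, hx.integral_walsh, if_neg (insert_ne_empty _ _), mul_zero]

theorem IsRademacherFamily.integrable_offDiagForm_mul (hx : IsRademacherFamily x μ)
    (M N : Matrix (Fin n) (Fin n) ℝ) :
    Integrable (fun ω => offDiagForm M x ω * offDiagForm N x ω) μ := by
  simp_rw [offDiagForm_mul_offDiagForm]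
  exact integrable_finsetSum _ fun _ _ => integrable_finsetSum _ fun _ _ =>
    (hx.integrable_walsh_mul_walsh _ _).const_mul _

theorem IsRademacherFamily.integral_offDiagForm_mul (hx : IsRademacherFamily x μ)
    (M N : Matrix (Fin n) (Fin n) ℝ) :
    ∫ ω, offDiagForm M x ω * offDiagForm N x ω ∂μ = offDiagSum M N := by
  have hint : ∀ p q : Fin n × Fin n, Integrable
      (fun ω => M p.1 p.2 * N q.1 q.2 * (walsh x {p.1, p.2} ω * walsh x {q.1, q.2} ω)) μ :=
    fun p q => (hx.integrable_walsh_mul_walsh _ _).const_mul _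
  have hpair : ∀ p ∈ univ.filter (fun p : Fin n × Fin n => p.1 < p.2),
      ∀ q ∈ univ.filter (fun p : Fin n × Fin n => p.1 < p.2),
      ({p.1, p.2} : Finset (Fin n)) = {q.1, q.2} ↔ p = q := fun p hp q hq =>
    (pair_eq_pair_iff_of_lt (mem_filter.mp hp).2 (mem_filter.mp hq).2).trans Prod.ext_iff.symm
  simp_rw [offDiagForm_mul_offDiagForm]
  rw [integral_finsetSum _ fun p _ => integrable_finsetSum _ fun q _ => hint p q, offDiagSum]
  refine sum_congr rfl fun p hp => ?_
  rw [integral_finsetSum _ fun q _ => hint p q]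
  simp only [integral_const_mul, hx.integral_walsh_mul_walsh]
  rw [sum_congr rfl fun q hq => by rw [if_congr (hpair p hp q hq) rfl rfl]]
  simp [hp]

theorem IsRademacherFamily.integral_quadRV (hx : IsRademacherFamily x μ)
    {M : Matrix (Fin n) (Fin n) ℝ} (hM : M.IsSymm) : ∫ ω, quadRV M x ω ∂μ = M.trace := by
  rw [integral_congr_ae (hx.quadRV_ae_eq hM), integral_add (integrable_const _)
    ((hx.integrable_offDiagForm M).const_mul 2), integral_const_mul, hx.integral_offDiagForm]
  simp

theorem IsRademacherFamily.integral_quadRV_mul (hx : IsRademacherFamily x μ)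
    {M N : Matrix (Fin n) (Fin n) ℝ} (hM : M.IsSymm) (hN : N.IsSymm) :
    ∫ ω, quadRV M x ω * quadRV N x ω ∂μ = M.trace * N.trace + 4 * offDiagSum M N := by
  have hexpand : (fun ω => quadRV M x ω * quadRV N x ω) =ᵐ[μ] fun ω =>
      M.trace * N.trace + (2 * M.trace * offDiagForm N x ω +
        (2 * N.trace * offDiagForm M x ω + 4 * (offDiagForm M x ω * offDiagForm N x ω))) := by
    filter_upwards [hx.quadRV_ae_eq hM, hx.quadRV_ae_eq hN] with ω hMω hNω
    rw [hMω, hNω]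
    ring
  have hZM := hx.integrable_offDiagForm M
  have hZN := hx.integrable_offDiagForm N
  have hZMN := hx.integrable_offDiagForm_mul M N
  rw [integral_congr_ae hexpand, integral_add (by fun_prop) (by fun_prop),
    integral_add (by fun_prop) (by fun_prop), integral_add (by fun_prop) (by fun_prop)]
  simp [integral_const_mul, hx.integral_offDiagForm, hx.integral_offDiagForm_mul]

theorem IsRademacherFamily.covariance_quadRV (hx : IsRademacherFamily x μ)
    {M N : Matrix (Fin n) (Fin n) ℝ} (hM : M.IsSymm) (hN : N.IsSymm) :
    (∫ ω, quadRV M x ω * quadRV N x ω ∂μ) - (∫ ω, quadRV M x ω ∂μ) * ∫ ω, quadRV N x ω ∂μ =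
      4 * offDiagSum M N := by
  rw [hx.integral_quadRV_mul hM hN, hx.integral_quadRV hM, hx.integral_quadRV hN,
    add_sub_cancel_left]

end QuadraticForm

theorem correlation_quadratic_forms_general {Ω : Type*} [MeasurableSpace Ω]
    (μ : Measure Ω) [IsProbabilityMeasure μ]
    {n : ℕ} (x : Fin n → Ω → ℝ) (hmeas : ∀ i, Measurable (x i))
    (hindep : iIndepFun x μ)
    (hplus : ∀ i, μ {ω | x i ω = 1} = 1/2) (hminus : ∀ i, μ {ω | x i ω = -1} = 1/2)
    (A B : Matrix (Fin n) (Fin n) ℝ) (hA : A.IsSymm) (hB : B.IsSymm) :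
    ((∫ ω, quadRV A x ω * quadRV B x ω ∂μ) -
        (∫ ω, quadRV A x ω ∂μ) * ∫ ω, quadRV B x ω ∂μ) /
      (Real.sqrt ((∫ ω, quadRV A x ω * quadRV A x ω ∂μ) -
          (∫ ω, quadRV A x ω ∂μ) * ∫ ω, quadRV A x ω ∂μ) *
        Real.sqrt ((∫ ω, quadRV B x ω * quadRV B x ω ∂μ) -
          (∫ ω, quadRV B x ω ∂μ) * ∫ ω, quadRV B x ω ∂μ)) =
    offDiagSum A B / (Real.sqrt (offDiagSum A A) * Real.sqrt (offDiagSum B B)) := by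
  have hx : IsRademacherFamily x μ := ⟨hmeas, hindep, hplus, hminus⟩
  have hsqrt_four_mul (s : ℝ) : Real.sqrt (4 * s) = 2 * Real.sqrt s := by
    rw [Real.sqrt_mul (by norm_num), show (4 : ℝ) = 2 ^ 2 by norm_num, Real.sqrt_sq (by norm_num)]
  rw [hx.covariance_quadRV hA hB, hx.covariance_quadRV hA hA, hx.covariance_quadRV hB hB,
    hsqrt_four_mul, hsqrt_four_mul]
  ring

/-- the correlation of `xᵀAx` and `xᵀBx` equals
`(∑_{i<j} A_{ij}B_{ij}) / (√(∑_{i<j} A_{ij}²)·√(∑_{i<j} B_{ij}²))`, for symmetric `A`, `B`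
each having a nonzero off-diagonal entry. -/
theorem correlation_quadratic_forms {Ω : Type*} [MeasurableSpace Ω]
    (μ : Measure Ω) [IsProbabilityMeasure μ]
    {n : ℕ} (x : Fin n → Ω → ℝ) (hmeas : ∀ i, Measurable (x i))
    (hindep : iIndepFun x μ)
    (hplus : ∀ i, μ {ω | x i ω = 1} = 1/2) (hminus : ∀ i, μ {ω | x i ω = -1} = 1/2)
    (A B : Matrix (Fin n) (Fin n) ℝ) (hA : A.IsSymm) (hB : B.IsSymm)
    (hAne : ∃ i j, i ≠ j ∧ A i j ≠ 0) (hBne : ∃ i j, i ≠ j ∧ B i j ≠ 0) :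
    ((∫ ω, quadRV A x ω * quadRV B x ω ∂μ) -
        (∫ ω, quadRV A x ω ∂μ) * ∫ ω, quadRV B x ω ∂μ) /
      (Real.sqrt ((∫ ω, quadRV A x ω * quadRV A x ω ∂μ) -
          (∫ ω, quadRV A x ω ∂μ) * ∫ ω, quadRV A x ω ∂μ) *
        Real.sqrt ((∫ ω, quadRV B x ω * quadRV B x ω ∂μ) -
          (∫ ω, quadRV B x ω ∂μ) * ∫ ω, quadRV B x ω ∂μ)) =
    offDiagSum A B / (Real.sqrt (offDiagSum A A) * Real.sqrt (offDiagSum B B)) :=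
  correlation_quadratic_forms_general μ x hmeas hindep hplus hminus A B hA hB
end

section
/- Let n ≥ 3 be odd, let 0 ≤ ρ < 1, assume every node has degree mᵢ ≥ 1 and F has full column rank, and let x be uniformly distributed on {x ∈ {−1,1}ⁿ : Σᵢ xᵢ ∈ {−1,1}}. Then E[xᵀK(ρ)x] = tr(K(ρ)·C), where C is the n×n matrix with all diagonal entries equal to 1 and all off-diagonal entries equal to −1/n. -/
open Matrix

/-- The finite set of sign vectors `{-1,1}ⁿ` (as real vectors). -/
noncomputable def signVecs (n : ℕ) : Finset (Fin n → ℝ) := by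
  classical
  exact (Finset.univ : Finset (Fin n → Bool)).image (fun b i => if b i then 1 else -1)

/-- Balanced sign vectors: `∑ᵢ xᵢ = 0`. -/
noncomputable def balancedVecs (n : ℕ) : Finset (Fin n → ℝ) := by
  classical
  exact (signVecs n).filter (fun v => ∑ i, v i = 0)

/-- Near-balanced sign vectors: `∑ᵢ xᵢ ∈ {-1,1}`. -/
noncomputable def nearBalancedVecs (n : ℕ) : Finset (Fin n → ℝ) := by
  classical
  exact (signVecs n).filter (fun v => ∑ i, v i = 1 ∨ ∑ i, v i = -1)

open Finset

/-!
The quadratic form is linear in `x xᵀ`, so it suffices to compute the second-moment matrix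
`∑ₓ x xᵀ` over the set `N` of near-balanced sign vectors.
Its diagonal is `#N` since `xᵢ² = 1`.
`N` is invariant under permuting coordinates, so all off-diagonal entries share one value `t`;
summing all entries gives `∑ₓ (∑ᵢ xᵢ)² = #N`, i.e. `n #N + n (n - 1) t = #N`, whence
`t = -#N / n`.
-/

lemma mem_signVecs {n : ℕ} {v : Fin n → ℝ} :
    v ∈ signVecs n ↔ ∀ i, v i = 1 ∨ v i = -1 := by
  classical
  simp only [signVecs, mem_image, mem_univ, true_and]
  constructor
  · rintro ⟨b, rfl⟩ i
    by_cases hb : b i <;> simp [hb]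
  · intro h
    refine ⟨fun i => decide (v i = 1), funext fun i => ?_⟩
    rcases h i with h1 | h1 <;> norm_num [h1]

lemma mem_nearBalancedVecs {n : ℕ} {v : Fin n → ℝ} :
    v ∈ nearBalancedVecs n ↔ v ∈ signVecs n ∧ (∑ i, v i = 1 ∨ ∑ i, v i = -1) := by
  simp [nearBalancedVecs]

lemma nearBalancedVecs_nonempty {n : ℕ} (hodd : Odd n) : (nearBalancedVecs n).Nonempty := by
  refine ⟨fun i => (-1 : ℝ) ^ (i : ℕ),
    mem_nearBalancedVecs.2 ⟨mem_signVecs.2 fun i => ?_, ?_⟩⟩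
  · exact (Nat.even_or_odd (i : ℕ)).imp Even.neg_one_pow Odd.neg_one_pow
  · left
    rw [Fin.sum_univ_eq_sum_range (fun k => (-1 : ℝ) ^ k) n, neg_one_geom_sum]
    simp [Nat.not_even_iff_odd.2 hodd]

lemma comp_perm_mem_nearBalancedVecs {n : ℕ} (σ : Equiv.Perm (Fin n)) {v : Fin n → ℝ}
    (h : v ∈ nearBalancedVecs n) : v ∘ σ ∈ nearBalancedVecs n := by
  rw [mem_nearBalancedVecs, mem_signVecs] at h ⊢
  refine ⟨fun i => h.1 (σ i), ?_⟩
  simpa only [Function.comp_apply, Equiv.sum_comp σ v] using h.2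

lemma sum_nearBalancedVecs_comp_perm {n : ℕ} (σ : Equiv.Perm (Fin n))
    (f : (Fin n → ℝ) → ℝ) :
    ∑ v ∈ nearBalancedVecs n, f (v ∘ σ) = ∑ v ∈ nearBalancedVecs n, f v :=
  sum_nbij' (· ∘ σ) (· ∘ σ.symm)
    (fun _ hv => comp_perm_mem_nearBalancedVecs σ hv)
    (fun _ hv => comp_perm_mem_nearBalancedVecs σ.symm hv)
    (fun _ _ => funext fun _ => by simp) (fun _ _ => funext fun _ => by simp) (fun _ _ => rfl)

lemma Equiv.Perm.exists_apply_eq_apply_eq {α : Type*} [DecidableEq α] {i j i' j' : α}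
    (hij : i ≠ j) (hij' : i' ≠ j') : ∃ σ : Equiv.Perm α, σ i = i' ∧ σ j = j' := by
  set σ₁ := Equiv.swap i i'
  have hσ₁ : σ₁ i = i' := Equiv.swap_apply_left _ _
  have hne : i' ≠ σ₁ j := hσ₁ ▸ fun h => hij (σ₁.injective h)
  refine ⟨σ₁.trans (Equiv.swap (σ₁ j) j'), ?_, Equiv.swap_apply_left _ _⟩
  rw [Equiv.trans_apply, hσ₁]
  exact Equiv.swap_apply_of_ne_of_ne hne hij'

lemma sum_nearBalancedVecs_mul_self {n : ℕ} (i : Fin n) :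
    ∑ v ∈ nearBalancedVecs n, v i * v i = #(nearBalancedVecs n) := by
  rw [card_eq_sum_ones, Nat.cast_sum, Nat.cast_one]
  refine sum_congr rfl fun v hv => ?_
  rcases mem_signVecs.1 (mem_nearBalancedVecs.1 hv).1 i with h | h <;> rw [h] <;> norm_num

lemma sum_nearBalancedVecs_mul_eq_of_ne {n : ℕ} {i j i' j' : Fin n} (hij : i ≠ j)
    (hij' : i' ≠ j') :
    ∑ v ∈ nearBalancedVecs n, v i' * v j' = ∑ v ∈ nearBalancedVecs n, v i * v j := by
  obtain ⟨σ, rfl, rfl⟩ := Equiv.Perm.exists_apply_eq_apply_eq hij hij'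
  exact sum_nearBalancedVecs_comp_perm σ fun v => v i * v j

lemma sum_sum_sum_nearBalancedVecs_mul {n : ℕ} :
    ∑ i : Fin n, ∑ j : Fin n, ∑ v ∈ nearBalancedVecs n, v i * v j =
      #(nearBalancedVecs n) := by
  have hsq : ∀ v ∈ nearBalancedVecs n, (∑ i, v i) * (∑ j, v j) = 1 := fun v hv => by
    rcases (mem_nearBalancedVecs.1 hv).2 with h | h <;> rw [h] <;> norm_num
  calc ∑ i : Fin n, ∑ j : Fin n, ∑ v ∈ nearBalancedVecs n, v i * v j
      = ∑ i : Fin n, ∑ v ∈ nearBalancedVecs n, ∑ j : Fin n, v i * v j :=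
        sum_congr rfl fun _ _ => sum_comm
    _ = ∑ v ∈ nearBalancedVecs n, ∑ i, ∑ j, v i * v j := sum_comm
    _ = ∑ v ∈ nearBalancedVecs n, (∑ i, v i) * (∑ j, v j) := by simp_rw [sum_mul_sum]
    _ = ∑ _v ∈ nearBalancedVecs n, (1 : ℝ) := sum_congr rfl hsq
    _ = #(nearBalancedVecs n) := by simp

lemma sum_nearBalancedVecs_mul_of_ne {n : ℕ} {i j : Fin n} (hij : i ≠ j) :
    ∑ v ∈ nearBalancedVecs n, v i * v j = -#(nearBalancedVecs n) / n := by
  set t := ∑ v ∈ nearBalancedVecs n, v i * v j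
  have hn : (1 : ℝ) < n := by
    exact_mod_cast (show 1 < n by have := Fin.val_ne_of_ne hij; omega)
  have hentry : ∀ i' j' : Fin n, ∑ v ∈ nearBalancedVecs n, v i' * v j' =
      t + if i' = j' then (#(nearBalancedVecs n) : ℝ) - t else 0 := by
    intro i' j'
    split_ifs with h
    · rw [h, sum_nearBalancedVecs_mul_self]; ring
    · rw [sum_nearBalancedVecs_mul_eq_of_ne hij h, add_zero]
  have htotal := sum_sum_sum_nearBalancedVecs_mul (n := n)
  simp only [hentry, sum_add_distrib, sum_ite_eq, sum_const,
    mem_univ, if_true, card_univ, Fintype.card_fin, nsmul_eq_mul] at htotal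
  have hfactor : (n * t + #(nearBalancedVecs n)) * ((n : ℝ) - 1) = 0 := by
    linear_combination htotal
  rw [eq_div_iff (by positivity)]
  linarith [(mul_eq_zero.1 hfactor).resolve_right (sub_ne_zero.2 hn.ne')]

lemma sum_vecMulVec_nearBalancedVecs (n : ℕ) :
    ∑ v ∈ nearBalancedVecs n, vecMulVec v v =
      (#(nearBalancedVecs n) : ℝ) •
        Matrix.of fun i j => if i = j then (1 : ℝ) else -1 / (n : ℝ) := by
  ext i j
  rw [Matrix.sum_apply, Matrix.smul_apply, Matrix.of_apply, smul_eq_mul]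
  simp_rw [vecMulVec_apply]
  split_ifs with h
  · rw [h, sum_nearBalancedVecs_mul_self, mul_one]
  · rw [sum_nearBalancedVecs_mul_of_ne h]; ring

lemma Matrix.dotProduct_mulVec_self_eq_trace {ι R : Type*} [Fintype ι] [CommSemiring R]
    (A : Matrix ι ι R) (v : ι → R) : v ⬝ᵥ A *ᵥ v = trace (A * vecMulVec v v) := by
  simp only [dotProduct, mulVec, trace, diag, mul_apply, vecMulVec_apply, mul_sum]
  exact sum_congr rfl fun i _ => sum_congr rfl fun j _ => by ring

theorem expected_precision_odd_general {n p : ℕ} (hodd : Odd n)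
    (W : Matrix (Fin n) (Fin n) ℝ)
    (F : Matrix (Fin n) (Fin (p + 1)) ℝ)
    (ρ : ℝ) :
    (∑ v ∈ nearBalancedVecs n, v ⬝ᵥ (Kmat W F ρ).mulVec v) /
        ((nearBalancedVecs n).card : ℝ) =
      (Kmat W F ρ *
        Matrix.of fun i j => if i = j then (1 : ℝ) else -1 / (n : ℝ)).trace := by
  have hcard : (#(nearBalancedVecs n) : ℝ) ≠ 0 := by
    exact_mod_cast (nearBalancedVecs_nonempty hodd).card_pos.ne'
  simp_rw [Matrix.dotProduct_mulVec_self_eq_trace, ← trace_sum, ← Matrix.mul_sum,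
    sum_vecMulVec_nearBalancedVecs, Matrix.mul_smul, trace_smul, smul_eq_mul]
  field_simp

/-- for odd `n ≥ 3`, `0 ≤ ρ < 1`, degrees `≥ 1` and full-column-rank `F`,
the expectation of `xᵀK(ρ)x` over uniform near-balanced sign vectors equals `tr(K(ρ)·C)`,
where `C` has unit diagonal and off-diagonal entries `-1/n`. -/
theorem expected_precision_odd {n p : ℕ} (hn : 3 ≤ n) (hodd : Odd n)
    (W : Matrix (Fin n) (Fin n) ℝ)
    (hWsymm : W.IsSymm) (hW01 : ∀ i j, W i j = 0 ∨ W i j = 1) (hWdiag : ∀ i, W i i = 0)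
    (hdeg : ∀ i, 1 ≤ degVec W i)
    (F : Matrix (Fin n) (Fin (p + 1)) ℝ) (hF : F.rank = p + 1)
    (ρ : ℝ) (hρ0 : 0 ≤ ρ) (hρ1 : ρ < 1) :
    (∑ v ∈ nearBalancedVecs n, v ⬝ᵥ (Kmat W F ρ).mulVec v) /
        ((nearBalancedVecs n).card : ℝ) =
      (Kmat W F ρ *
        Matrix.of fun i j => if i = j then (1 : ℝ) else -1 / (n : ℝ)).trace :=
  expected_precision_odd_general hodd W F ρ
end
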